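/- arXiv:2303.14689 — 5 statements merged into one kernel-verified Lean document; each statement's English description precedes it below -/
import Mathlib

section
/- Let λ ∈ [0,1) and θ₁, θ₂ ∈ [0,1]. Define F_λ(θ₁,θ₂) = artanh( λ(θ₁+θ₂) / (1 + λθ₁θ₂) ). Then (1/2)·(F_λ(θ₁,θ₂) + F_λ(θ₁,−θ₂)) ≤ F_λ(θ₁,0), i.e. artanh( λ(θ₁+θ₂)/(1+λθ₁θ₂) ) + artanh( λ(θ₁−θ₂)/(1−λθ₁θ₂) ) ≤ 2·artanh(λθ₁). -/
/-
Writing `artanh (a / d) = ½ log ((d + a) / (d - a))`, the claim becomes an inequality between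
products of linear forms in `u = λθ₁`, `v = λθ₂`, `w = λθ₁θ₂`. The numerators and denominators on
the left pair up as differences of squares, `(1 + u)² - (v + w)²` and `(1 - u)² - (v - w)²`, so the
inequality reduces to `(v - w) / (1 - u) ≤ (v + w) / (1 + u)`, that is `θ₁ (1 - λ) ≥ 0`.
-/

/-- The real inverse hyperbolic tangent, `artanh x = ½ · log((1+x)/(1−x))`. -/
noncomputable def artanh (x : ℝ) : ℝ := (1 / 2) * Real.log ((1 + x) / (1 - x))

lemma artanh_div_of_abs_lt {a d : ℝ} (h : |a| < d) :
    artanh (a / d) = 1 / 2 * Real.log ((d + a) / (d - a)) := by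
  obtain ⟨hlow, hup⟩ := abs_lt.mp h
  have hd : d ≠ 0 := by linarith
  rw [artanh, one_add_div hd, one_sub_div hd, div_div_div_cancel_right₀ hd]

lemma artanh_add_artanh_le_two_mul_artanh {u v w : ℝ} (hu : |u| < 1)
    (hplus : |u + v| < 1 + w) (hminus : |u - v| < 1 - w)
    (hvw : |v - w| * (1 + u) ≤ |v + w| * (1 - u)) :
    artanh ((u + v) / (1 + w)) + artanh ((u - v) / (1 - w)) ≤ 2 * artanh u := by
  obtain ⟨hu₀, hu₁⟩ := abs_lt.mp hu
  obtain ⟨hp₀, hp₁⟩ := abs_lt.mp hplus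
  obtain ⟨hm₀, hm₁⟩ := abs_lt.mp hminus
  rw [artanh_div_of_abs_lt hplus, artanh_div_of_abs_lt hminus, artanh]
  have hx : 0 < (1 + w + (u + v)) / (1 + w - (u + v)) := div_pos (by linarith) (by linarith)
  have hy : 0 < (1 - w + (u - v)) / (1 - w - (u - v)) := div_pos (by linarith) (by linarith)
  have hsq : (v - w) ^ 2 * (1 + u) ^ 2 ≤ (v + w) ^ 2 * (1 - u) ^ 2 := by
    have := pow_le_pow_left₀ (mul_nonneg (abs_nonneg _) (by linarith)) hvw 2
    simpa only [mul_pow, sq_abs] using this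
  have hprod : (1 + w + (u + v)) / (1 + w - (u + v)) * ((1 - w + (u - v)) / (1 - w - (u - v)))
      ≤ ((1 + u) / (1 - u)) ^ 2 := by
    rw [div_mul_div_comm, div_pow, div_le_div_iff₀ (by nlinarith) (by nlinarith)]
    -- both products are differences of squares: `(1 ± u)² - (v ± w)²`
    nlinarith
  have hlog : Real.log ((1 + w + (u + v)) / (1 + w - (u + v)))
      + Real.log ((1 - w + (u - v)) / (1 - w - (u - v))) ≤ 2 * Real.log ((1 + u) / (1 - u)) := by
    rw [← Real.log_mul hx.ne' hy.ne']
    calc _ ≤ Real.log (((1 + u) / (1 - u)) ^ 2) := Real.log_le_log (mul_pos hx hy) hprod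
      _ = 2 * Real.log ((1 + u) / (1 - u)) := by rw [Real.log_pow]; norm_num
  linarith

/-- Lemma 3.2: for `λ ∈ [0,1)` and `θ₁, θ₂ ∈ [0,1]`,
`artanh(λ(θ₁+θ₂)/(1+λθ₁θ₂)) + artanh(λ(θ₁−θ₂)/(1−λθ₁θ₂)) ≤ 2·artanh(λθ₁)`. -/
theorem stmt0 (lam θ₁ θ₂ : ℝ) (hlam : lam ∈ Set.Ico (0 : ℝ) 1)
    (hθ₁ : θ₁ ∈ Set.Icc (0 : ℝ) 1) (hθ₂ : θ₂ ∈ Set.Icc (0 : ℝ) 1) :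
    artanh (lam * (θ₁ + θ₂) / (1 + lam * θ₁ * θ₂))
      + artanh (lam * (θ₁ - θ₂) / (1 - lam * θ₁ * θ₂))
      ≤ 2 * artanh (lam * θ₁) := by
  obtain ⟨hl₀, hl₁⟩ := hlam
  obtain ⟨h₁₀, h₁₁⟩ := hθ₁
  obtain ⟨h₂₀, h₂₁⟩ := hθ₂
  have hu₀ : 0 ≤ lam * θ₁ := mul_nonneg hl₀ h₁₀
  have hv₀ : 0 ≤ lam * θ₂ := mul_nonneg hl₀ h₂₀
  have hu₁ : lam * θ₁ < 1 := by nlinarith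
  have hv₁ : lam * θ₂ < 1 := by nlinarith
  have hw₀ : 0 ≤ lam * θ₁ * θ₂ := mul_nonneg hu₀ h₂₀
  have hwu : lam * θ₁ * θ₂ ≤ lam * θ₁ := by nlinarith
  have hwv : lam * θ₁ * θ₂ ≤ lam * θ₂ := by nlinarith
  have huvw : lam * θ₁ * (lam * θ₂) ≤ lam * θ₁ * θ₂ := by nlinarith
  have key := artanh_add_artanh_le_two_mul_artanh (u := lam * θ₁) (v := lam * θ₂)
    (w := lam * θ₁ * θ₂) (abs_lt.mpr ⟨by linarith, hu₁⟩)
    (abs_lt.mpr ⟨by linarith, by nlinarith⟩) (abs_lt.mpr ⟨by linarith, by linarith⟩)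
    (by rw [abs_of_nonneg (by linarith), abs_of_nonneg (by linarith)]; nlinarith)
  convert key using 3 <;> ring
end

section
/- Let λ ∈ (0,1) and θ₁, θ₂ ∈ (0,1]. Define F_λ(θ₁,θ₂) = artanh( λ(θ₁+θ₂) / (1 + λθ₁θ₂) ). Then the inequality (1/2)·(F_λ(θ₁,θ₂) + F_λ(θ₁,−θ₂)) ≤ F_λ(θ₁,0) is strict: artanh( λ(θ₁+θ₂)/(1+λθ₁θ₂) ) + artanh( λ(θ₁−θ₂)/(1−λθ₁θ₂) ) < 2·artanh(λθ₁). -/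
lemma artanh_div {n d : ℝ} (hd : d ≠ 0) :
    artanh (n / d) = 1 / 2 * Real.log ((d + n) / (d - n)) := by
  unfold artanh
  congr 2
  rw [one_add_div hd, one_sub_div hd, div_div_div_cancel_right₀ hd]

lemma log_add_log_lt_two_mul_log {P Q R S : ℝ} (hQ : |Q| < P) (hS : |S| < R)
    (h : P * |S| < R * |Q|) :
    Real.log ((P + Q) / (R + S)) + Real.log ((P - Q) / (R - S)) < 2 * Real.log (P / R) := by
  have hP : 0 < P := (abs_nonneg Q).trans_lt hQ
  have hR : 0 < R := (abs_nonneg S).trans_lt hS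
  obtain ⟨hPQ, hPQ'⟩ := abs_lt.mp hQ
  obtain ⟨hRS, hRS'⟩ := abs_lt.mp hS
  have hsq : (P * |S|) ^ 2 < (R * |Q|) ^ 2 := pow_lt_pow_left₀ h (by positivity) two_ne_zero
  have hprod : (P + Q) / (R + S) * ((P - Q) / (R - S)) < (P / R) ^ 2 := by
    rw [div_mul_div_comm, div_pow, div_lt_div_iff₀ (by nlinarith) (by positivity)]
    simp only [mul_pow, sq_abs] at hsq
    nlinarith
  have hlog := Real.log_lt_log (by apply mul_pos <;> apply div_pos <;> linarith) hprod
  rwa [Real.log_pow, Nat.cast_ofNat, Real.log_mul (by apply ne_of_gt; apply div_pos <;> linarith)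
    (by apply ne_of_gt; apply div_pos <;> linarith)] at hlog

/-- Strictness claim of Lemma 3.2: for `λ ∈ (0,1)` and `θ₁, θ₂ ∈ (0,1]`,
`artanh(λ(θ₁+θ₂)/(1+λθ₁θ₂)) + artanh(λ(θ₁−θ₂)/(1−λθ₁θ₂)) < 2·artanh(λθ₁)`. -/
theorem stmt1 (lam θ₁ θ₂ : ℝ) (hlam : lam ∈ Set.Ioo (0 : ℝ) 1)
    (hθ₁ : θ₁ ∈ Set.Ioc (0 : ℝ) 1) (hθ₂ : θ₂ ∈ Set.Ioc (0 : ℝ) 1) :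
    artanh (lam * (θ₁ + θ₂) / (1 + lam * θ₁ * θ₂))
      + artanh (lam * (θ₁ - θ₂) / (1 - lam * θ₁ * θ₂))
      < 2 * artanh (lam * θ₁) := by
  obtain ⟨hl0, hl1⟩ := hlam
  obtain ⟨h10, h11⟩ := hθ₁
  obtain ⟨h20, h21⟩ := hθ₂
  have hc_le_a : lam * θ₁ * θ₂ ≤ lam * θ₁ := mul_le_of_le_one_right (by positivity) h21
  have hc_le_b : 0 ≤ lam * θ₂ - lam * θ₁ * θ₂ := by nlinarith [mul_pos hl0 h20]
  have ha_add_b_sub_c_le : lam * (θ₁ + θ₂ - θ₁ * θ₂) ≤ lam :=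
    mul_le_of_le_one_right hl0.le (by nlinarith [mul_nonneg (sub_nonneg.2 h11) (sub_nonneg.2 h21)])
  have hd₂ : 1 - lam * θ₁ * θ₂ ≠ 0 := by linarith [mul_pos hl0 h10]
  have key := log_add_log_lt_two_mul_log (P := 1 + lam * θ₁)
    (Q := lam * θ₂ + lam * θ₁ * θ₂) (R := 1 - lam * θ₁) (S := lam * θ₁ * θ₂ - lam * θ₂)
    (by rw [abs_of_pos (by positivity)]; nlinarith)
    (by rw [abs_of_nonpos (by linarith)]; linarith)
    (by
      rw [abs_of_nonpos (by linarith), abs_of_pos (by positivity)]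
      nlinarith [mul_lt_mul_of_pos_right hl1 (mul_pos (mul_pos hl0 h10) h20)])
  calc artanh (lam * (θ₁ + θ₂) / (1 + lam * θ₁ * θ₂))
        + artanh (lam * (θ₁ - θ₂) / (1 - lam * θ₁ * θ₂))
      = 1 / 2 * (Real.log ((1 + lam * θ₁ + (lam * θ₂ + lam * θ₁ * θ₂))
            / (1 - lam * θ₁ + (lam * θ₁ * θ₂ - lam * θ₂)))
          + Real.log ((1 + lam * θ₁ - (lam * θ₂ + lam * θ₁ * θ₂))
            / (1 - lam * θ₁ - (lam * θ₁ * θ₂ - lam * θ₂)))) := by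
        rw [artanh_div (by positivity), artanh_div hd₂]
        ring_nf
    _ < 1 / 2 * (2 * Real.log ((1 + lam * θ₁) / (1 - lam * θ₁))) := by linarith
    _ = 2 * artanh (lam * θ₁) := by unfold artanh; ring
end

section
/- Let λ ∈ [0,1] and θ₁, θ₂ ∈ [0,1). Then λ·( (1/2)(θ₁+θ₂)·artanh( λ(θ₁+θ₂)/(1+λθ₁θ₂) ) + (1/2)(θ₁−θ₂)·artanh( λ(θ₁−θ₂)/(1−λθ₁θ₂) ) ) ≤ λ²·( θ₁·artanh(θ₁) + θ₂·artanh(θ₂) ). -/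
open Set

theorem ConvexOn.map_smul_le {𝕜 E β : Type*} [Ring 𝕜] [PartialOrder 𝕜] [IsOrderedRing 𝕜]
    [AddCommMonoid E] [Module 𝕜 E] [AddCommMonoid β] [PartialOrder β] [Module 𝕜 β]
    {s : Set E} {f : E → β} (hf : ConvexOn 𝕜 s f) (h₀ : 0 ∈ s) (hf₀ : f 0 = 0) {x : E}
    (hx : x ∈ s) {t : 𝕜} (ht₀ : 0 ≤ t) (ht₁ : t ≤ 1) : f (t • x) ≤ t • f x := by
  simpa [hf₀] using hf.2 hx h₀ ht₀ (sub_nonneg.2 ht₁) (add_sub_cancel t 1)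

theorem artanh_zero : artanh 0 = 0 := by simp [artanh]

theorem artanh_neg (x : ℝ) : artanh (-x) = -artanh x := by
  rw [artanh, artanh, sub_neg_eq_add, ← sub_eq_add_neg, ← mul_neg, ← Real.log_inv, inv_div]

theorem artanh_eq_real_artanh {x : ℝ} (hx : x ∈ Icc (-1) 1) : artanh x = Real.artanh x :=
  (Real.artanh_eq_half_log hx).symm

theorem artanh_le_artanh {x y : ℝ} (hx : -1 < x) (hy : y < 1) (hxy : x ≤ y) :
    artanh x ≤ artanh y := by
  rw [artanh_eq_real_artanh ⟨hx.le, by linarith⟩, artanh_eq_real_artanh ⟨by linarith, hy.le⟩]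
  exact Real.artanh_le_artanh hx hy hxy

theorem artanh_add {a b : ℝ} (ha : a ∈ Ioo (-1) 1) (hb : b ∈ Ioo (-1) 1) :
    artanh a + artanh b = artanh ((a + b) / (1 + a * b)) := by
  obtain ⟨ha₁, ha₂⟩ := ha
  obtain ⟨hb₁, hb₂⟩ := hb
  have hab : 0 < 1 + a * b := by nlinarith
  have hnum : 1 + (a + b) / (1 + a * b) = (1 + a) * (1 + b) / (1 + a * b) := by
    field_simp; ring
  have hden : 1 - (a + b) / (1 + a * b) = (1 - a) * (1 - b) / (1 + a * b) := by
    field_simp; ring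
  have hqa : (1 + a) / (1 - a) ≠ 0 := (div_pos (by linarith) (by linarith)).ne'
  have hqb : (1 + b) / (1 - b) ≠ 0 := (div_pos (by linarith) (by linarith)).ne'
  rw [artanh, artanh, artanh, ← mul_add, ← Real.log_mul hqa hqb, hnum, hden,
    div_div_div_cancel_right₀ hab.ne', div_mul_div_comm]

theorem artanh_sub {a b : ℝ} (ha : a ∈ Ioo (-1) 1) (hb : b ∈ Ioo (-1) 1) :
    artanh a - artanh b = artanh ((a - b) / (1 - a * b)) := by
  have hb' : -b ∈ Ioo (-1) 1 := ⟨by linarith [hb.2], by linarith [hb.1]⟩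
  rw [sub_eq_add_neg, ← artanh_neg, artanh_add ha hb', ← sub_eq_add_neg, mul_neg,
    ← sub_eq_add_neg]

theorem hasDerivAt_artanh {x : ℝ} (hx : x ∈ Ioo (-1) 1) :
    HasDerivAt artanh (1 - x ^ 2)⁻¹ x := by
  obtain ⟨hx₁, hx₂⟩ := hx
  have h₁ : 0 < 1 + x := by linarith
  have h₂ : 0 < 1 - x := by linarith
  have h₃ : 0 < 1 - x ^ 2 := by nlinarith
  have hquot : HasDerivAt (fun y => (1 + y) / (1 - y)) (2 / (1 - x) ^ 2) x :=
    (((hasDerivAt_id x).const_add 1).div ((hasDerivAt_id x).const_sub 1) h₂.ne').congr_deriv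
      (by simp only [id]; ring)
  exact ((hquot.log (by positivity)).const_mul (1 / 2)).congr_deriv (by field_simp; ring)

theorem convexOn_artanh : ConvexOn ℝ (Ico 0 1) artanh := by
  have hIco : Ico (0 : ℝ) 1 ⊆ Ioo (-1) 1 := Ico_subset_Ioo_left (by norm_num)
  have hIoo : Ioo (0 : ℝ) 1 ⊆ Ioo (-1) 1 := Ioo_subset_Ioo_left (by norm_num)
  refine MonotoneOn.convexOn_of_deriv (convex_Ico 0 1)
    (fun x hx ↦ (hasDerivAt_artanh (hIco hx)).continuousAt.continuousWithinAt) ?_ ?_ <;>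
    rw [interior_Ico]
  · exact fun x hx ↦ (hasDerivAt_artanh (hIoo hx)).differentiableAt.differentiableWithinAt
  · intro x hx y hy hxy
    rw [(hasDerivAt_artanh (hIoo hx)).deriv, (hasDerivAt_artanh (hIoo hy)).deriv]
    gcongr
    · nlinarith [hy.1, hy.2]
    · exact hx.1.le

theorem artanh_mul_le {t x : ℝ} (ht₀ : 0 ≤ t) (ht₁ : t ≤ 1) (hx : x ∈ Ico 0 1) :
    artanh (t * x) ≤ t * artanh x :=
  convexOn_artanh.map_smul_le ⟨le_rfl, one_pos⟩ artanh_zero hx ht₀ ht₁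

theorem artanh_mul_add_div_le {l a b : ℝ} (hl : l ∈ Icc 0 1) (ha : a ∈ Ico 0 1)
    (hb : b ∈ Ico 0 1) :
    artanh (l * (a + b) / (1 + l * a * b)) ≤ l * (artanh a + artanh b) := by
  obtain ⟨hl₀, hl₁⟩ := hl
  obtain ⟨ha₀, ha₁⟩ := ha
  obtain ⟨hb₀, hb₁⟩ := hb
  have hla : l * a < 1 := by nlinarith
  have hlb : l * b < 1 := by nlinarith
  have hnum : 0 ≤ l * (a + b) := by positivity
  have hden : 0 < 1 + l * a * (l * b) := by positivity
  calc artanh (l * (a + b) / (1 + l * a * b))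
      ≤ artanh ((l * a + l * b) / (1 + l * a * (l * b))) := by
        refine artanh_le_artanh (neg_one_lt_zero.trans_le (by positivity)) ?_ ?_
        · rw [div_lt_one hden]; nlinarith
        · rw [← mul_add]
          have hshrink : 0 ≤ l * a * b * (1 - l) := mul_nonneg (by positivity) (sub_nonneg.2 hl₁)
          exact div_le_div_of_nonneg_left hnum hden (by linarith)
    _ = artanh (l * a) + artanh (l * b) :=
        (artanh_add ⟨by nlinarith, hla⟩ ⟨by nlinarith, hlb⟩).symm
    _ ≤ l * artanh a + l * artanh b :=
        add_le_add (artanh_mul_le hl₀ hl₁ ⟨ha₀, ha₁⟩) (artanh_mul_le hl₀ hl₁ ⟨hb₀, hb₁⟩)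
    _ = l * (artanh a + artanh b) := (mul_add _ _ _).symm

theorem artanh_mul_sub_div_le {l a b : ℝ} (hl : l ∈ Icc 0 1) (ha : a ∈ Ico 0 1)
    (hb : b ∈ Ico 0 1) (hba : b ≤ a) :
    artanh (l * (a - b) / (1 - l * a * b)) ≤ l * (artanh a - artanh b) := by
  obtain ⟨hl₀, hl₁⟩ := hl
  obtain ⟨ha₀, ha₁⟩ := ha
  obtain ⟨hb₀, hb₁⟩ := hb
  have hab : 0 < 1 - a * b := by nlinarith
  have hlab : 0 < 1 - l * a * b := by nlinarith [mul_nonneg ha₀ hb₀]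
  have hnum : 0 ≤ l * (a - b) := mul_nonneg hl₀ (sub_nonneg.2 hba)
  have hq : (a - b) / (1 - a * b) ∈ Ico 0 1 :=
    ⟨div_nonneg (sub_nonneg.2 hba) hab.le, by rw [div_lt_one hab]; nlinarith⟩
  calc artanh (l * (a - b) / (1 - l * a * b))
      ≤ artanh (l * ((a - b) / (1 - a * b))) := by
        refine artanh_le_artanh (neg_one_lt_zero.trans_le (div_nonneg hnum hlab.le))
          (by nlinarith [hq.1, hq.2]) ?_
        rw [← mul_div_assoc]
        exact div_le_div_of_nonneg_left hnum hab (by nlinarith [mul_nonneg ha₀ hb₀])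
    _ ≤ l * artanh ((a - b) / (1 - a * b)) := artanh_mul_le hl₀ hl₁ hq
    _ = l * (artanh a - artanh b) := by
        rw [artanh_sub ⟨by linarith, ha₁⟩ ⟨by linarith, hb₁⟩]

theorem sub_mul_artanh_mul_sub_div_le {l a b : ℝ} (hl : l ∈ Icc 0 1) (ha : a ∈ Ico 0 1)
    (hb : b ∈ Ico 0 1) :
    (a - b) * artanh (l * (a - b) / (1 - l * a * b)) ≤ l * ((a - b) * (artanh a - artanh b)) := by
  rcases le_total b a with hba | hab
  · linear_combination
      mul_le_mul_of_nonneg_left (artanh_mul_sub_div_le hl ha hb hba) (sub_nonneg.2 hba)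
  · have hswap : l * (a - b) / (1 - l * a * b) = -(l * (b - a) / (1 - l * b * a)) := by ring
    rw [hswap, artanh_neg]
    linear_combination
      mul_le_mul_of_nonneg_left (artanh_mul_sub_div_le hl hb ha hab) (sub_nonneg.2 hab)

/-- Lemma B.1 (SKL contraction for `r = 3`), in terms of the θ-parameters: for `λ ∈ [0,1]`
and `θ₁, θ₂ ∈ [0,1)`,
`λ·(½(θ₁+θ₂)·artanh(λ(θ₁+θ₂)/(1+λθ₁θ₂)) + ½(θ₁−θ₂)·artanh(λ(θ₁−θ₂)/(1−λθ₁θ₂)))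
  ≤ λ²·(θ₁·artanh θ₁ + θ₂·artanh θ₂)`. -/
theorem stmt2 (lam θ₁ θ₂ : ℝ) (hlam : lam ∈ Set.Icc (0 : ℝ) 1)
    (hθ₁ : θ₁ ∈ Set.Ico (0 : ℝ) 1) (hθ₂ : θ₂ ∈ Set.Ico (0 : ℝ) 1) :
    lam * ((1 / 2) * (θ₁ + θ₂) * artanh (lam * (θ₁ + θ₂) / (1 + lam * θ₁ * θ₂))
        + (1 / 2) * (θ₁ - θ₂) * artanh (lam * (θ₁ - θ₂) / (1 - lam * θ₁ * θ₂)))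
      ≤ lam ^ 2 * (θ₁ * artanh θ₁ + θ₂ * artanh θ₂) := by
  have hplus := mul_le_mul_of_nonneg_left (artanh_mul_add_div_le hlam hθ₁ hθ₂)
    (add_nonneg hθ₁.1 hθ₂.1)
  have hminus := sub_mul_artanh_mul_sub_div_le hlam hθ₁ hθ₂
  linear_combination (1 / 2 : ℝ) * mul_le_mul_of_nonneg_left (add_le_add hplus hminus) hlam.1
end

section
/- Let λ ∈ [1/5, 1] be real and i ≥ 2 an integer. Then (i−1)·( λ + (1−λ)·2^{2−i} ) ≤ i·( λ + (1−λ)·2^{1−i} ); equivalently, (i−1)/(λ + (1−λ)·2^{1−i}) ≤ i/(λ + (1−λ)·2^{2−i}). Moreover, the inequality is strict whenever i = 2 or i ≥ 5. -/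
/-!
Writing `t = 2^(1-i)`, so that `2^(2-i) = 2t`, the right side minus the left side is
`λ - (1 - λ)(i - 2)t`. The sequence `(i - 2)·2^(1-i)` is at most `1/4`, with equality only at
`i = 3, 4`, and `(1 - λ)/4 ≤ λ` is exactly `λ ≥ 1/5`.
-/

lemma two_mul_le_two_pow (n : ℕ) : 2 * n ≤ 2 ^ n := by
  rcases n with _ | n
  · simp
  · have := Nat.lt_two_pow_self (n := n)
    rw [pow_succ]
    omega

lemma two_mul_lt_two_pow {n : ℕ} (hn : 3 ≤ n) : 2 * n < 2 ^ n := by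
  induction n, hn using Nat.le_induction with
  | base => norm_num
  | succ k _ ih =>
    rw [pow_succ]
    omega

lemma intCast_sub_two_mul_two_zpow (n : ℕ) :
    (((n + 2 : ℤ) : ℝ) - 2) * (2 : ℝ) ^ (1 - (n + 2 : ℤ)) = n / 2 ^ (n + 1) := by
  rw [show (1 : ℤ) - (n + 2) = -((n + 1 : ℕ) : ℤ) by push_cast; ring, zpow_neg, zpow_natCast]
  push_cast
  ring

lemma sub_two_mul_two_zpow_le {i : ℤ} (hi : 2 ≤ i) : ((i : ℝ) - 2) * (2 : ℝ) ^ (1 - i) ≤ 1 / 4 := by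
  obtain ⟨n, rfl⟩ : ∃ n : ℕ, i = n + 2 := ⟨(i - 2).toNat, by omega⟩
  rw [intCast_sub_two_mul_two_zpow, div_le_div_iff₀ (by positivity) (by norm_num), pow_succ]
  exact_mod_cast (by linarith [two_mul_le_two_pow n] : n * 4 ≤ 1 * (2 ^ n * 2))

lemma sub_two_mul_two_zpow_lt {i : ℤ} (hi : i = 2 ∨ 5 ≤ i) :
    ((i : ℝ) - 2) * (2 : ℝ) ^ (1 - i) < 1 / 4 := by
  rcases hi with rfl | hi
  · norm_num
  obtain ⟨n, rfl⟩ : ∃ n : ℕ, i = n + 2 := ⟨(i - 2).toNat, by omega⟩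
  rw [intCast_sub_two_mul_two_zpow, div_lt_div_iff₀ (by positivity) (by norm_num), pow_succ]
  exact_mod_cast (by linarith [two_mul_lt_two_pow (n := n) (by omega)] : n * 4 < 1 * (2 ^ n * 2))

lemma mul_weighted_sub_mul_weighted (a lam t : ℝ) :
    a * (lam + (1 - lam) * t) - (a - 1) * (lam + (1 - lam) * (2 * t))
      = lam - (1 - lam) * ((a - 2) * t) := by
  ring

lemma one_sub_mul_le_of_le_quarter {lam x : ℝ} (hlam : lam ∈ Set.Icc (1 / 5 : ℝ) 1)
    (hx : x ≤ 1 / 4) : (1 - lam) * x ≤ lam := by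
  nlinarith [hlam.1, hlam.2]

lemma one_sub_mul_lt_of_lt_quarter {lam x : ℝ} (hlam : 1 / 5 ≤ lam) (hx₀ : 0 ≤ x)
    (hx : x < 1 / 4) : (1 - lam) * x < lam := by
  nlinarith

/-- Key termwise comparison in the proof of Lemma 4.3: for `λ ∈ [1/5, 1]` and integer
`i ≥ 2`, `(i−1)·(λ + (1−λ)·2^{2−i}) ≤ i·(λ + (1−λ)·2^{1−i})`; equivalently
`(i−1)/(λ + (1−λ)·2^{1−i}) ≤ i/(λ + (1−λ)·2^{2−i})`. The inequality is strict whenever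
`i = 2` or `i ≥ 5`. -/
theorem stmt9 (lam : ℝ) (hlam : lam ∈ Set.Icc (1 / 5 : ℝ) 1) (i : ℤ) (hi : 2 ≤ i) :
    ((i : ℝ) - 1) * (lam + (1 - lam) * (2 : ℝ) ^ (2 - i))
        ≤ (i : ℝ) * (lam + (1 - lam) * (2 : ℝ) ^ (1 - i)) ∧
      ((i : ℝ) - 1) / (lam + (1 - lam) * (2 : ℝ) ^ (1 - i))
        ≤ (i : ℝ) / (lam + (1 - lam) * (2 : ℝ) ^ (2 - i)) ∧
      ((i = 2 ∨ 5 ≤ i) →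
        ((i : ℝ) - 1) * (lam + (1 - lam) * (2 : ℝ) ^ (2 - i))
          < (i : ℝ) * (lam + (1 - lam) * (2 : ℝ) ^ (1 - i))) := by
  set t : ℝ := (2 : ℝ) ^ (1 - i) with ht
  have ht₀ : 0 < t := by positivity
  have htwo : (2 : ℝ) ^ (2 - i) = 2 * t := by
    rw [ht, show 2 - i = (1 - i) + 1 by ring, zpow_add_one₀ two_ne_zero, mul_comm]
  have hweight {s : ℝ} (hs : 0 < s) : 0 < lam + (1 - lam) * s :=
    add_pos_of_pos_of_nonneg (by linarith [hlam.1]) (mul_nonneg (by linarith [hlam.2]) hs.le)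
  have hle : ((i : ℝ) - 1) * (lam + (1 - lam) * (2 * t)) ≤ i * (lam + (1 - lam) * t) := by
    rw [← sub_nonneg, mul_weighted_sub_mul_weighted, sub_nonneg]
    exact one_sub_mul_le_of_le_quarter hlam (sub_two_mul_two_zpow_le hi)
  rw [htwo]
  refine ⟨hle, ?_, fun hi' => ?_⟩
  · rw [div_le_div_iff₀ (hweight ht₀) (hweight (by positivity))]
    linarith
  · have hi₂ : (0 : ℝ) ≤ i - 2 := by rw [sub_nonneg]; exact_mod_cast hi
    rw [← sub_pos, mul_weighted_sub_mul_weighted, sub_pos]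
    exact one_sub_mul_lt_of_lt_quarter hlam.1 (mul_nonneg hi₂ ht₀.le) (sub_two_mul_two_zpow_lt hi')
end

section
/- Let r ≥ 2 be an integer and θ : Fin (r−1) → ℝ. Then Σ_{x ∈ ({−1,1})^{Fin (r−1)}} ( Π_{j} (1 + θ_j·x_j) − Π_{j} (1 − θ_j·x_j) )² = 2^r · ( Π_{j} (1 + θ_j²) − Π_{j} (1 − θ_j²) ), where the sum is over all sign vectors x with entries in {−1, +1} and all products are over j ∈ Fin (r−1). -/
/-! Expanding the square leaves three products over the coordinates. Summed over all sign
vectors, each product factors into a product of single-sign sums, and these are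
`2 (1 + θ_j²)`, `2 (1 + θ_j²)` and `2 (1 - θ_j²)`. -/

open Finset

section SignVectors

variable {ι R : Type*} [Fintype ι] [DecidableEq ι] [CommRing R]

lemma sum_signVectors_prod (f : ι → ℤˣ → R) :
    ∑ x : ι → ℤˣ, ∏ j, f j (x j) = ∏ j, (f j 1 + f j (-1)) := by
  rw [← Fintype.prod_sum]
  simp [UnitsInt.univ]

lemma sum_signVectors_prod_of_sum_signs (f : ι → ℤˣ → R) (c : ι → R)
    (hc : ∀ j, f j 1 + f j (-1) = 2 * c j) :
    ∑ x : ι → ℤˣ, ∏ j, f j (x j) = 2 ^ Fintype.card ι * ∏ j, c j := by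
  simp only [sum_signVectors_prod, hc, prod_mul_distrib, prod_const, card_univ]

lemma sum_signVectors_sq_sub_prod (θ : ι → R) :
    ∑ x : ι → ℤˣ,
        (∏ j, (1 + θ j * ((x j : ℤ) : R)) - ∏ j, (1 - θ j * ((x j : ℤ) : R))) ^ 2
      = 2 ^ (Fintype.card ι + 1) * (∏ j, (1 + θ j ^ 2) - ∏ j, (1 - θ j ^ 2)) := by
  calc _ = ∑ x : ι → ℤˣ, (∏ j, (1 + θ j * ((x j : ℤ) : R)) ^ 2
          + ∏ j, (1 - θ j * ((x j : ℤ) : R)) ^ 2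
          - 2 * ∏ j, (1 + θ j * ((x j : ℤ) : R)) * (1 - θ j * ((x j : ℤ) : R))) := by
        refine sum_congr rfl fun x _ => ?_
        rw [prod_pow, prod_pow, prod_mul_distrib]
        ring
    _ = 2 ^ Fintype.card ι * ∏ j, (1 + θ j ^ 2) + 2 ^ Fintype.card ι * ∏ j, (1 + θ j ^ 2)
          - 2 * (2 ^ Fintype.card ι * ∏ j, (1 - θ j ^ 2)) := by
        rw [sum_sub_distrib, sum_add_distrib, ← mul_sum,
          sum_signVectors_prod_of_sum_signs (fun j u => (1 + θ j * ((u : ℤ) : R)) ^ 2)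
            (fun j => 1 + θ j ^ 2) fun j => by push_cast; ring,
          sum_signVectors_prod_of_sum_signs (fun j u => (1 - θ j * ((u : ℤ) : R)) ^ 2)
            (fun j => 1 + θ j ^ 2) fun j => by push_cast; ring,
          sum_signVectors_prod_of_sum_signs
            (fun j u => (1 + θ j * ((u : ℤ) : R)) * (1 - θ j * ((u : ℤ) : R)))
            (fun j => 1 - θ j ^ 2) fun j => by push_cast; ring]
    _ = _ := by ring

end SignVectors

theorem stmt11_general (r : ℕ) (θ : Fin (r - 1) → ℝ) :
    ∑ x : Fin (r - 1) → ℤˣ,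
        (∏ j, (1 + θ j * ((x j : ℤ) : ℝ)) - ∏ j, (1 - θ j * ((x j : ℤ) : ℝ))) ^ 2
      = 2 ^ r * (∏ j, (1 + θ j ^ 2) - ∏ j, (1 - θ j ^ 2)) := by
  rw [sum_signVectors_sq_sub_prod, Fintype.card_fin]
  obtain rfl | hr := Nat.eq_zero_or_pos r
  · simp
  · rw [Nat.sub_add_cancel hr]

/-- Polynomial identity from the proof of the large-degree asymptotics
(Lemma `proof-large-deg-step:per-hyperedge`): summing over all sign vectors
`x : Fin (r−1) → {±1}`, the squared difference of products satisfies
`Σ_x (Π_j (1 + θ_j x_j) − Π_j (1 − θ_j x_j))² = 2^r · (Π_j (1 + θ_j²) − Π_j (1 − θ_j²))`.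
Sign vectors are encoded as functions into `ℤˣ = {1, −1}`. -/
theorem stmt11 (r : ℕ) (hr : 2 ≤ r) (θ : Fin (r - 1) → ℝ) :
    ∑ x : Fin (r - 1) → ℤˣ,
        (∏ j, (1 + θ j * ((x j : ℤ) : ℝ)) - ∏ j, (1 - θ j * ((x j : ℤ) : ℝ))) ^ 2
      = 2 ^ r * (∏ j, (1 + θ j ^ 2) - ∏ j, (1 - θ j ^ 2)) :=
  stmt11_general r θ
end
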